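/- For k ≥ 3, let T_k be the tree obtained from the star K_{1,k} by subdividing every edge exactly once; explicitly T_k has center v, vertices x_1,...,x_k adjacent to v, and leaves y_1,...,y_k with y_i adjacent to x_i. Then the upper total domination number of T_k equals 2k: the set of all leaves and support vertices {x_1,...,x_k,y_1,...,y_k} is a minimal total dominating set of maximum cardinality. -/

import Mathlib

/-!
The `2k` non-central vertices form a minimal total dominating set: `x_i` and `y_i` are each
other's private neighbours. A minimal total dominating set cannot be the whole vertex set, since
that properly contains this one, so `Γ_t(T_k) ≤ (2k + 1) - 1`.
-/

variable {V : Type*}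

/-- `S` is a total dominating set of `G`: every vertex has a neighbor in `S`. -/
def isTDSet (G : SimpleGraph V) (S : Set V) : Prop := ∀ v : V, ∃ u ∈ S, G.Adj v u

/-- `S` is a minimal total dominating set of `G`. -/
def isMinTDSet (G : SimpleGraph V) (S : Set V) : Prop :=
  isTDSet G S ∧ ∀ T : Set V, T ⊂ S → ¬ isTDSet G T

/-- Upper total domination number `Γ_t`. -/
noncomputable def upperTD (G : SimpleGraph V) [Fintype V] : ℕ :=
  sSup {n | ∃ S : Finset V, isMinTDSet G ↑S ∧ S.card = n}

/-- Total domination number `γ_t`. -/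
noncomputable def totalDomNum (G : SimpleGraph V) [Fintype V] : ℕ :=
  sInf {n | ∃ S : Finset V, isTDSet G ↑S ∧ S.card = n}

/-- `S` is an open-open irredundant set: each `v ∈ S` has a neighbor not adjacent
to any other vertex of `S`, i.e. `N(v) \ N(S \ {v}) ≠ ∅`. -/
def isOOIrr (G : SimpleGraph V) (S : Set V) : Prop :=
  ∀ v ∈ S, ∃ w, G.Adj v w ∧ ∀ u ∈ S, u ≠ v → ¬ G.Adj u w

/-- Open-open irredundance number `OOIR`. -/
noncomputable def ooirNum (G : SimpleGraph V) [Fintype V] : ℕ :=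
  sSup {n | ∃ S : Finset V, isOOIrr G ↑S ∧ S.card = n}

/-- `M` is an induced matching: a set of edges of `G` whose endpoints induce a
1-regular subgraph (no two distinct edges share or join endpoints). -/
def isInducedMatching (G : SimpleGraph V) (M : Set (Sym2 V)) : Prop :=
  (∀ e ∈ M, e ∈ G.edgeSet) ∧
  ∀ e ∈ M, ∀ f ∈ M, e ≠ f → ∀ u ∈ e, ∀ v ∈ f, u ≠ v ∧ ¬ G.Adj u v

/-- Induced matching number `ν_I`. -/
noncomputable def inducedMatchingNum (G : SimpleGraph V) [Fintype V] : ℕ :=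
  sSup {n | ∃ M : Finset (Sym2 V), isInducedMatching G ↑M ∧ M.card = n}

/-- `L` is a total dominating sequence of `G`. -/
def isTDSeq (G : SimpleGraph V) (L : List V) : Prop :=
  L.Nodup ∧ isTDSet G {v | v ∈ L} ∧
  ∀ (i : ℕ) (h : i < L.length), ∃ w, G.Adj L[i] w ∧ ∀ u ∈ L.take i, ¬ G.Adj u w

/-- Grundy total domination number. -/
noncomputable def grundyTD (G : SimpleGraph V) [Fintype V] : ℕ :=
  sSup {n | ∃ L : List V, isTDSeq G L ∧ L.length = n}


/-- The tree obtained from `K_{1,k}` by subdividing every edge once: center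
`v = Sum.inl ()`, support vertices `x_i = Sum.inr (i, 0)` adjacent to `v`, and
leaves `y_i = Sum.inr (i, 1)` with `y_i` adjacent to `x_i`. -/
def T1star (k : ℕ) : SimpleGraph (Unit ⊕ Fin k × Fin 2) :=
  SimpleGraph.fromRel (fun a b =>
    match a, b with
    | Sum.inl _, Sum.inr p => p.2 = 0
    | Sum.inr p, Sum.inr q => p.1 = q.1 ∧ p.2 = 0 ∧ q.2 = 1
    | _, _ => False)

section TotalDomination

variable {G : SimpleGraph V}

theorem isMinTDSet_of_forall_exists_private {S : Set V} (hS : isTDSet G S)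
    (hpriv : ∀ v ∈ S, ∃ w, ∀ u ∈ S, G.Adj w u → u = v) : isMinTDSet G S := by
  refine ⟨hS, fun T hTS hT => ?_⟩
  obtain ⟨v, hvS, hvT⟩ := Set.exists_of_ssubset hTS
  obtain ⟨w, hw⟩ := hpriv v hvS
  obtain ⟨u, huT, hwu⟩ := hT w
  exact hvT (hw u (hTS.subset huT) hwu ▸ huT)

theorem isMinTDSet.ne_univ {S T : Set V} (hS : isMinTDSet G S) (hT : isTDSet G T)
    (hTne : T ≠ Set.univ) : S ≠ Set.univ := by
  rintro rfl
  exact hS.2 T (Set.ssubset_univ_iff.mpr hTne) hT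

theorem isMinTDSet.card_lt [Fintype V] {S : Finset V} {T : Set V} (hS : isMinTDSet G S)
    (hT : isTDSet G T) (hTne : T ≠ Set.univ) : S.card < Fintype.card V := by
  refine (Finset.card_lt_iff_ne_univ S).2 fun hSu => hS.ne_univ hT hTne ?_
  rw [hSu, Finset.coe_univ]

end TotalDomination

namespace T1star

variable {k : ℕ}

theorem adj_center_support (i : Fin k) : (T1star k).Adj (Sum.inl ()) (Sum.inr (i, 0)) := by
  simp [T1star]

theorem adj_support_leaf (i : Fin k) : (T1star k).Adj (Sum.inr (i, 0)) (Sum.inr (i, 1)) := by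
  simp [T1star]

theorem eq_support_of_adj_leaf {i : Fin k} {u : Unit ⊕ Fin k × Fin 2}
    (h : (T1star k).Adj (Sum.inr (i, 1)) u) : u = Sum.inr (i, 0) := by
  rcases u with u | ⟨j, b⟩
  · simp [T1star] at h
  · fin_cases b <;> simp_all [T1star, Prod.ext_iff]

theorem eq_center_or_leaf_of_adj_support {i : Fin k} {u : Unit ⊕ Fin k × Fin 2}
    (h : (T1star k).Adj (Sum.inr (i, 0)) u) : u = Sum.inl () ∨ u = Sum.inr (i, 1) := by
  rcases u with u | ⟨j, b⟩
  · exact Or.inl rfl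
  · fin_cases b <;> simp_all [T1star, Prod.ext_iff]

theorem isTDSet_range_inr (hk : 0 < k) : isTDSet (T1star k) (Set.range Sum.inr) := by
  rintro (v | ⟨i, b⟩)
  · exact ⟨Sum.inr (⟨0, hk⟩, 0), ⟨_, rfl⟩, adj_center_support _⟩
  · fin_cases b
    · exact ⟨Sum.inr (i, 1), ⟨_, rfl⟩, adj_support_leaf i⟩
    · exact ⟨Sum.inr (i, 0), ⟨_, rfl⟩, (adj_support_leaf i).symm⟩

theorem isMinTDSet_range_inr (hk : 0 < k) : isMinTDSet (T1star k) (Set.range Sum.inr) := by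
  refine isMinTDSet_of_forall_exists_private (isTDSet_range_inr hk) ?_
  rintro _ ⟨⟨i, b⟩, rfl⟩
  fin_cases b
  · exact ⟨Sum.inr (i, 1), fun u _ h => eq_support_of_adj_leaf h⟩
  · refine ⟨Sum.inr (i, 0), fun u hu h => ?_⟩
    rcases eq_center_or_leaf_of_adj_support h with rfl | rfl
    · simp at hu
    · rfl

theorem card_vertices : Fintype.card (Unit ⊕ Fin k × Fin 2) = 2 * k + 1 := by
  simp [Fintype.card_sum, Fintype.card_prod]
  ring

end T1star

/-- For `k ≥ 3`, the set of all leaves and support vertices of the once-subdivided star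
is a minimal TD-set (of maximum cardinality), and `Γ_t(T_k) = 2k`. -/
theorem stmt15 (k : ℕ) (hk : 3 ≤ k) :
    isMinTDSet (T1star k) (Set.range (Sum.inr : Fin k × Fin 2 → Unit ⊕ Fin k × Fin 2)) ∧
    upperTD (T1star k) = 2 * k := by
  have hk0 : 0 < k := by omega
  have hmin := T1star.isMinTDSet_range_inr hk0
  refine ⟨hmin, IsGreatest.csSup_eq ⟨⟨Finset.univ.map .inr, by simpa using hmin, ?_⟩, ?_⟩⟩
  · simp [Fintype.card_prod]
    ring
  · rintro _ ⟨S, hS, rfl⟩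
    have hlt := hS.card_lt (T1star.isTDSet_range_inr hk0) fun h => by
      simpa using Set.eq_univ_iff_forall.1 h (.inl ())
    rw [T1star.card_vertices] at hlt
    omega
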